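/- arXiv:2005.09283 — 4 statements merged into one kernel-verified Lean document; each statement's English description precedes it below -/
import Mathlib

section
/- Let B be a nonempty open ball in ℝⁿ and let Γ be a countable subgroup of Aff(ℝⁿ). If F : ℝⁿ → ℝⁿ is smooth on B and for every r ∈ B there exists γ ∈ Γ with F(r) = γ(r), then there exists a single γ ∈ Γ such that F(r) = γ(r) for all r ∈ B. -/
open Metric



variable {V : Type*} [NormedAddCommGroup V] [NormedSpace ℝ V]

lemma aff_apply_add_smul (γ : V ≃ᵃ[ℝ] V) (q v : V) (t : ℝ) :
    γ (q + t • v) = γ q + t • γ.linear v := by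
  have h := γ.toAffineMap.map_vadd q (t • v)
  simpa [vadd_eq_add, add_comm, map_smul] using h

lemma aff_linear_eq_of_ball (γ : V ≃ᵃ[ℝ] V) (A : V →L[ℝ] V) (cc q : V) (r : ℝ) (hr : 0 < r)
    (h : ∀ x ∈ ball q r, γ x = cc + A x) (v : V) : γ.linear v = A v := by
  set t := r / (2 * (‖v‖ + 1)) with ht
  have hv : (0:ℝ) < ‖v‖ + 1 := by positivity
  have ht0 : 0 < t := by positivity
  have htv : t * (‖v‖ + 1) = r / 2 := by
    rw [ht, div_mul_eq_mul_div, div_eq_div_iff (by positivity) two_ne_zero]; ring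
  have hmem : q + t • v ∈ ball q r := by
    rw [mem_ball, dist_eq_norm]
    have : q + t • v - q = t • v := by abel
    rw [this, norm_smul, Real.norm_of_nonneg ht0.le]
    nlinarith [norm_nonneg v]
  have h1 := h q (mem_ball_self hr)
  have h2 := h _ hmem
  rw [aff_apply_add_smul, h1, map_add, map_smul] at h2
  have : t • γ.linear v = t • (A v) := by
    have h3 := add_left_cancel ((add_assoc cc (A q) _) ▸ h2)
    exact add_left_cancel h3
  exact smul_right_injective V ht0.ne' this

lemma aff_eq_of_ball (γ : V ≃ᵃ[ℝ] V) (A : V →L[ℝ] V) (cc q : V) (r : ℝ) (hr : 0 < r)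
    (h : ∀ x ∈ ball q r, γ x = cc + A x) (x : V) : γ x = cc + A x := by
  have hx : γ x = γ q + γ.linear (x - q) := by
    have := aff_apply_add_smul γ q (x - q) 1
    simpa using this
  rw [hx, h q (mem_ball_self hr), aff_linear_eq_of_ball γ A cc q r hr h, map_sub]
  abel

lemma aff_eq_of_ball2 (γ γ' : V ≃ᵃ[ℝ] V) (q : V) (r : ℝ) (hr : 0 < r)
    (h : ∀ x ∈ ball q r, γ x = γ' x) (x : V) : γ x = γ' x := by
  have hlin : ∀ v, γ.linear v = γ'.linear v := by
    intro v
    set t := r / (2 * (‖v‖ + 1)) with ht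
    have hv : (0:ℝ) < ‖v‖ + 1 := by positivity
    have ht0 : 0 < t := by positivity
    have htv : t * (‖v‖ + 1) = r / 2 := by
      rw [ht, div_mul_eq_mul_div, div_eq_div_iff (by positivity) two_ne_zero]; ring
    have hmem : q + t • v ∈ ball q r := by
      rw [mem_ball, dist_eq_norm]
      have h4 : q + t • v - q = t • v := by abel
      rw [h4, norm_smul, Real.norm_of_nonneg ht0.le]
      nlinarith [norm_nonneg v]
    have h1 := h q (mem_ball_self hr)
    have h2 := h _ hmem
    rw [aff_apply_add_smul, aff_apply_add_smul, h1] at h2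
    exact smul_right_injective V ht0.ne' (add_left_cancel h2)
  have hx : γ x = γ q + γ.linear (x - q) := by
    simpa using aff_apply_add_smul γ q (x - q) 1
  have hx' : γ' x = γ' q + γ'.linear (x - q) := by
    simpa using aff_apply_add_smul γ' q (x - q) 1
  rw [hx, hx', h q (mem_ball_self hr), hlin]

lemma aff_hasFDerivAt {W : Type*} [NormedAddCommGroup W] [NormedSpace ℝ W]
    [FiniteDimensional ℝ W] (γ : W ≃ᵃ[ℝ] W) (x : W) :
    HasFDerivAt (γ : W → W)
      (LinearMap.toContinuousLinearMap (γ.linear : W →ₗ[ℝ] W)) x := by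
  set L := LinearMap.toContinuousLinearMap (γ.linear : W →ₗ[ℝ] W) with hL
  have hfun : ∀ y, γ y = L y + γ 0 := by
    intro y
    have := γ.toAffineMap.map_vadd (0 : W) y
    simpa [vadd_eq_add, hL, add_comm] using this
  have h5 : HasFDerivAt (fun y => L y + γ 0) L x := L.hasFDerivAt.add_const (γ 0)
  exact h5.congr_of_eventuallyEq (Filter.Eventually.of_forall hfun)


lemma rel_baire {X Y : Type*} [MetricSpace X] [CompleteSpace X] [TopologicalSpace Y]
    [T2Space Y] {T : Set X} (hTc : IsClosed T) (Fm : X → Y) (G : ℕ → X → Y)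
    (hFm : ContinuousOn Fm T) (hG : ∀ i, Continuous (G i))
    (hcover : ∀ x ∈ T, ∃ i, Fm x = G i x) (p₁ : X) (hp₁ : p₁ ∈ T) (ρ : ℝ) (hρ : 0 < ρ) :
    ∃ i, ∃ p₂ ∈ T ∩ ball p₁ ρ, ∃ δ > 0, ∀ y ∈ T, dist y p₂ < δ → Fm y = G i y := by
  haveI : CompleteSpace T := hTc.completeSpace_coe
  set g : ℕ → Set T := fun i => {x : T | Fm ↑x = G i ↑x} with hg_def
  have hgclosed : ∀ i, IsClosed (g i) :=
    fun i => isClosed_eq hFm.restrict ((hG i).comp continuous_subtype_val)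
  have hgunion : ⋃ i, g i = Set.univ := by
    ext x
    simp only [Set.mem_iUnion, Set.mem_univ, iff_true]
    exact hcover ↑x x.2
  have hd := dense_iUnion_interior_of_closed hgclosed hgunion
  have hOopen : IsOpen (Subtype.val ⁻¹' ball p₁ ρ : Set T) :=
    isOpen_ball.preimage continuous_subtype_val
  have hOne : (Subtype.val ⁻¹' ball p₁ ρ : Set T).Nonempty :=
    ⟨⟨p₁, hp₁⟩, mem_ball_self hρ⟩
  obtain ⟨x₂, hx₂O, hx₂d⟩ := hd.inter_open_nonempty _ hOopen hOne
  obtain ⟨i₁, hx₂int⟩ := Set.mem_iUnion.mp hx₂d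
  refine ⟨i₁, ↑x₂, ⟨x₂.2, hx₂O⟩, ?_⟩
  have hmemnhds : g i₁ ∈ nhds x₂ := mem_interior_iff_mem_nhds.mp hx₂int
  rw [nhds_induced] at hmemnhds
  obtain ⟨V, hVnhds, hVsub⟩ := hmemnhds
  obtain ⟨δ', hδ'pos, hδ'sub⟩ := Metric.mem_nhds_iff.mp hVnhds
  refine ⟨δ', hδ'pos, ?_⟩
  intro y hyT hyd
  have hyV : y ∈ V := hδ'sub hyd
  exact hVsub (show (⟨y, hyT⟩ : T) ∈ Subtype.val ⁻¹' V from hyV)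

abbrev EE (n : ℕ) := EuclideanSpace ℝ (Fin n)


set_option maxHeartbeats 2000000

/-- **Lifting the identity (§3).** If `F` is smooth on a nonempty open ball `B ⊆ ℝⁿ` and at
every point of `B` it agrees with the action of some element of a countable subgroup `Γ` of
the group of affine equivalences of `ℝⁿ`, then `F` coincides on all of `B` with the action of
a single element of `Γ`. -/
theorem lift_identity_on_ball (n : ℕ)
    (Γ : Subgroup (EuclideanSpace ℝ (Fin n) ≃ᵃ[ℝ] EuclideanSpace ℝ (Fin n)))
    (hΓ : (Γ : Set (EuclideanSpace ℝ (Fin n) ≃ᵃ[ℝ] EuclideanSpace ℝ (Fin n))).Countable)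
    (c : EuclideanSpace ℝ (Fin n)) (ε : ℝ) (hε : 0 < ε)
    (F : EuclideanSpace ℝ (Fin n) → EuclideanSpace ℝ (Fin n))
    (hF : ContDiffOn ℝ (⊤ : ℕ∞) F (ball c ε))
    (h : ∀ r ∈ ball c ε, ∃ γ ∈ Γ, F r = γ r) :
    ∃ γ ∈ Γ, ∀ r ∈ ball c ε, F r = γ r := by
  set gs : Set (EE n) := {p | ∃ γ ∈ Γ, ∀ᶠ x in nhds p, F x = γ x} with hgs_def
  have hgsOpen : IsOpen gs := by
    have : gs = ⋃ γ ∈ (Γ : Set ((EE n) ≃ᵃ[ℝ] (EE n))), {p | ∀ᶠ x in nhds p, F x = γ x} := by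
      ext p; simp [hgs_def]
    rw [this]
    exact isOpen_biUnion fun γ _ => isOpen_setOf_eventually_nhds
  -- derivative machinery
  set D1 : (EE n) → ((EE n) →L[ℝ] (EE n)) := fderiv ℝ F with hD1_def
  have hD1 : ContDiffOn ℝ (⊤ : ℕ∞) D1 (ball c ε) := hF.fderiv_of_isOpen (m := (⊤ : ℕ∞)) isOpen_ball (by simp)
  set D2 : (EE n) → ((EE n) →L[ℝ] ((EE n) →L[ℝ] (EE n))) := fderiv ℝ D1 with hD2_def
  have hD2cont : ContinuousOn D2 (ball c ε) :=
    (hD1.fderiv_of_isOpen (m := (⊤ : ℕ∞)) isOpen_ball (by simp)).continuousOn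
  have hD2zero : ∀ p ∈ gs, D2 p = 0 := by
    intro p hp
    obtain ⟨γ, hγΓ, hγ⟩ := hp
    set L := LinearMap.toContinuousLinearMap (γ.linear : (EE n) →ₗ[ℝ] (EE n)) with hL
    have hev : D1 =ᶠ[nhds p] fun _ => L := by
      filter_upwards [hγ.eventually_nhds] with x hx
      have hxe : F =ᶠ[nhds x] (γ : (EE n) → (EE n)) := hx
      rw [hD1_def, hxe.fderiv_eq, (aff_hasFDerivAt γ x).fderiv]
    rw [hD2_def, hev.fderiv_eq]
    exact fderiv_const_apply L
  -- main claim: every point of the ball is in gs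
  have key : ∀ p ∈ ball c ε, p ∈ gs := by
    by_contra hcon
    push_neg at hcon
    obtain ⟨p₁, hp₁B, hp₁⟩ := hcon
    obtain ⟨ρ0, hρ0, hρ0sub⟩ : ∃ ρ0 > 0, ball p₁ ρ0 ⊆ ball c ε :=
      (isOpen_iff.mp isOpen_ball) p₁ hp₁B
    set ρ := ρ0 / 2 with hρ
    have hρpos : 0 < ρ := by positivity
    have hcbsub : closedBall p₁ ρ ⊆ ball c ε := by
      refine subset_trans ?_ hρ0sub
      intro y hy
      rw [mem_closedBall] at hy
      rw [mem_ball]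
      linarith
    set T : Set (EE n) := closedBall p₁ ρ ∩ gsᶜ with hT_def
    have hTclosed : IsClosed T := Metric.isClosed_closedBall.inter hgsOpen.isClosed_compl
    have hTsub : T ⊆ ball c ε := fun y hy => hcbsub hy.1
    have hp₁T : p₁ ∈ T := ⟨mem_closedBall_self hρpos.le, hp₁⟩
    obtain ⟨f, hf⟩ := hΓ.exists_eq_range ⟨1, Γ.one_mem⟩
    have hcover : ∀ x ∈ T, ∃ i, F x = f i x := by
      intro x hx
      obtain ⟨γ, hγΓ, hxe⟩ := h x (hTsub hx)
      have : γ ∈ Set.range f := by rw [← hf]; exact hγΓ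
      obtain ⟨i, rfl⟩ := this
      exact ⟨i, hxe⟩
    obtain ⟨i₁, p₂, ⟨hp₂T, hp₂ball⟩, δ', hδ'pos, hδ'⟩ :=
      rel_baire hTclosed F (fun i => f i) ((hF.continuousOn).mono hTsub)
        (fun i => (f i).toAffineMap.continuous_of_finiteDimensional)
        hcover p₁ hp₁T ρ hρpos
    set γ₁ := f i₁ with hγ₁
    have hγ₁Γ : γ₁ ∈ Γ := by
      have : γ₁ ∈ Set.range f := ⟨i₁, rfl⟩
      rw [← hf] at this; exact this
    have hp₂gs : p₂ ∉ gs := hp₂T.2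
    set δ := min δ' (ρ - dist p₂ p₁) with hδ
    have hd12 : dist p₂ p₁ < ρ := mem_ball.mp hp₂ball
    have hδpos : 0 < δ := lt_min hδ'pos (by linarith)
    have hballρ : ball p₂ δ ⊆ ball p₁ ρ := by
      intro y hy
      rw [mem_ball] at hy ⊢
      have h1 : dist y p₂ < ρ - dist p₂ p₁ := lt_of_lt_of_le hy (min_le_right _ _)
      calc dist y p₁ ≤ dist y p₂ + dist p₂ p₁ := dist_triangle _ _ _
        _ < ρ := by linarith
    have hballB : ball p₂ δ ⊆ ball c ε := fun y hy =>
      hρ0sub (by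
        have := hballρ hy
        rw [mem_ball] at this ⊢
        linarith)
    have hC : ∀ y ∈ ball p₂ δ, y ∉ gs → F y = γ₁ y := by
      intro y hy hygs
      refine hδ' y ⟨ball_subset_closedBall (hballρ hy), hygs⟩ ?_
      exact lt_of_lt_of_le (mem_ball.mp hy) (min_le_left _ _)
    -- density of gs inside ball p₂ δ
    have hdense : ∀ z ∈ ball p₂ δ, z ∈ closure (gs ∩ ball p₂ δ) := by
      intro z hz
      rw [_root_.mem_closure_iff]
      intro O hOopen' hzO
      by_contra hem
      push_neg at hem
      have hWopen : IsOpen (O ∩ ball p₂ δ) := hOopen'.inter isOpen_ball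
      have hWne : (O ∩ ball p₂ δ).Nonempty := ⟨z, hzO, hz⟩
      obtain ⟨w, hwO, hwb⟩ := hWne
      have hwgs : w ∈ gs := by
        refine ⟨γ₁, hγ₁Γ, ?_⟩
        filter_upwards [hWopen.mem_nhds ⟨hwO, hwb⟩] with x hx
        refine hC x hx.2 ?_
        intro hxgs
        have : x ∈ O ∩ (gs ∩ ball p₂ δ) := ⟨hx.1, hxgs, hx.2⟩
        rw [hem] at this
        exact this
      have : w ∈ O ∩ (gs ∩ ball p₂ δ) := ⟨hwO, hwgs, hwb⟩
      rw [hem] at this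
      exact this
    -- D2 vanishes on ball p₂ δ
    have hD2ball : ∀ z ∈ ball p₂ δ, D2 z = 0 := by
      intro z hz
      have hzB : z ∈ ball c ε := hballB hz
      have hcont : ContinuousAt D2 z := hD2cont.continuousAt (isOpen_ball.mem_nhds hzB)
      haveI hne : (nhdsWithin z (gs ∩ ball p₂ δ)).NeBot :=
        mem_closure_iff_nhdsWithin_neBot.mp (hdense z hz)
      have t1 : Filter.Tendsto D2 (nhdsWithin z (gs ∩ ball p₂ δ)) (nhds (D2 z)) :=
        hcont.continuousWithinAt.tendsto
      have t2 : Filter.Tendsto D2 (nhdsWithin z (gs ∩ ball p₂ δ)) (nhds 0) := by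
        refine Filter.Tendsto.congr' ?_ tendsto_const_nhds
        filter_upwards [eventually_mem_nhdsWithin] with x hx
        exact (hD2zero x hx.1).symm
      exact tendsto_nhds_unique t1 t2
    -- D1 constant on ball p₂ δ
    have hp₂mem : p₂ ∈ ball p₂ δ := mem_ball_self hδpos
    have hD1diffAt : ∀ x ∈ ball p₂ δ, DifferentiableAt ℝ D1 x := by
      intro x hx
      exact (hD1.differentiableOn (by simp)).differentiableAt
        (isOpen_ball.mem_nhds (hballB hx))
    have hD1const : ∀ x ∈ ball p₂ δ, D1 x = D1 p₂ := by
      intro x hx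
      have hb := Convex.norm_image_sub_le_of_norm_fderiv_le hD1diffAt
        (fun y hy => le_of_eq (by rw [show fderiv ℝ D1 y = 0 from hD2ball y hy, norm_zero]))
        (convex_ball p₂ δ) hp₂mem hx
      rw [zero_mul] at hb
      have h5 : ‖D1 x - D1 p₂‖ ≤ 0 := hb
      have h6 := le_antisymm h5 (norm_nonneg _)
      rwa [norm_eq_zero, sub_eq_zero] at h6
    set A : (EE n) →L[ℝ] (EE n) := D1 p₂ with hA
    set cc : (EE n) := F p₂ - A p₂ with hcc
    have hFdiffAt : ∀ x ∈ ball p₂ δ, DifferentiableAt ℝ F x := by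
      intro x hx
      exact (hF.differentiableOn (by simp)).differentiableAt
        (isOpen_ball.mem_nhds (hballB hx))
    have haffine : ∀ x ∈ ball p₂ δ, F x = cc + A x := by
      intro x hx
      set G : (EE n) → (EE n) := fun y => F y - A y with hG
      have hGdiff : ∀ y ∈ ball p₂ δ, DifferentiableAt ℝ G y := fun y hy =>
        (hFdiffAt y hy).sub (A.differentiableAt)
      have hGder : ∀ y ∈ ball p₂ δ, fderiv ℝ G y = 0 := by
        intro y hy
        rw [hG, fderiv_fun_sub (hFdiffAt y hy) A.differentiableAt, A.fderiv]
        have hDy : fderiv ℝ F y = A := hD1const y hy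
        rw [hDy, sub_self]
      have hb := Convex.norm_image_sub_le_of_norm_fderiv_le hGdiff
        (fun y hy => le_of_eq (by rw [hGder y hy, norm_zero]))
        (convex_ball p₂ δ) hp₂mem hx
      rw [zero_mul] at hb
      have h6 : ‖G x - G p₂‖ ≤ 0 := hb
      have h7 := le_antisymm h6 (norm_nonneg _)
      rw [norm_eq_zero, sub_eq_zero] at h7
      have h8 : F x - A x = F p₂ - A p₂ := h7
      rw [hcc]
      have h9 : F x = F p₂ - A p₂ + A x := by
        rw [← h8]; abel
      exact h9
    -- pick a point of gs in the ball
    have hqne : (gs ∩ ball p₂ δ).Nonempty :=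
      closure_nonempty_iff.mp ⟨p₂, hdense p₂ hp₂mem⟩
    obtain ⟨q, hqgs, hqball⟩ := hqne
    obtain ⟨γ₂, hγ₂Γ, hγ₂⟩ := hqgs
    obtain ⟨r₂, hr₂pos, hr₂⟩ := eventually_nhds_iff_ball.mp hγ₂
    set r₃ := min r₂ (δ - dist q p₂) with hr₃
    have hqd : dist q p₂ < δ := mem_ball.mp hqball
    have hr₃pos : 0 < r₃ := lt_min hr₂pos (by linarith)
    have hr₃sub : ball q r₃ ⊆ ball p₂ δ := by
      intro y hy
      rw [mem_ball] at hy ⊢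
      have h8 : dist y q < δ - dist q p₂ := lt_of_lt_of_le hy (min_le_right _ _)
      calc dist y p₂ ≤ dist y q + dist q p₂ := dist_triangle _ _ _
        _ < δ := by linarith
    have honball : ∀ x ∈ ball q r₃, γ₂ x = cc + A x := by
      intro x hx
      rw [← hr₂ x (mem_ball.mpr (lt_of_lt_of_le (mem_ball.mp hx) (min_le_left _ _)))]
      exact haffine x (hr₃sub hx)
    have hγ₂all := aff_eq_of_ball γ₂ A cc q r₃ hr₃pos honball
    apply hp₂gs
    refine ⟨γ₂, hγ₂Γ, ?_⟩
    filter_upwards [isOpen_ball.mem_nhds hp₂mem] with x hx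
    rw [haffine x hx, hγ₂all x]
  -- connectedness finale
  have hc : c ∈ ball c ε := mem_ball_self hε
  obtain ⟨γ₀, hγ₀Γ, hγ₀⟩ := key c hc
  refine ⟨γ₀, hγ₀Γ, ?_⟩
  set u : Set (EE n) := {p | ∀ᶠ x in nhds p, F x = γ₀ x} with hu_def
  set v : Set (EE n) :=
    ⋃ γ ∈ {γ' | γ' ∈ Γ ∧ γ' ≠ γ₀}, {p | ∀ᶠ x in nhds p, F x = γ x} with hv_def
  have hu : IsOpen u := isOpen_setOf_eventually_nhds
  have hv : IsOpen v := isOpen_biUnion fun γ _ => isOpen_setOf_eventually_nhds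
  have hdisj : Disjoint u v := by
    rw [Set.disjoint_left]
    intro p hpu hpv
    simp only [hv_def, Set.mem_iUnion, Set.mem_setOf_eq] at hpv
    obtain ⟨γ, ⟨hγΓ, hne⟩, hpγ⟩ := hpv
    have hboth : ∀ᶠ x in nhds p, γ₀ x = γ x := by
      filter_upwards [hpu, hpγ] with x h1 h2
      rw [← h1, ← h2]
    obtain ⟨r, hrpos, hr⟩ := eventually_nhds_iff_ball.mp hboth
    exact hne (AffineEquiv.ext fun x => (aff_eq_of_ball2 γ₀ γ p r hrpos hr x).symm)
  have hsub : ball c ε ⊆ u ∪ v := by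
    intro p hp
    obtain ⟨γ, hγΓ, hγp⟩ := key p hp
    by_cases hcase : γ = γ₀
    · left
      subst hcase
      exact hγp
    · right
      simp only [hv_def, Set.mem_iUnion, Set.mem_setOf_eq]
      exact ⟨γ, ⟨hγΓ, hcase⟩, hγp⟩
  have hcu : (ball c ε ∩ u).Nonempty := ⟨c, hc, hγ₀⟩
  have hfin := (convex_ball c ε).isPreconnected.subset_left_of_subset_union hu hv hdisj hsub hcu
  intro r hr
  exact (hfin hr).self_of_nhds
end

section
/- Let B be a nonempty open ball in ℝⁿ, let B' ⊆ ℝᵐ be open, and let Γ be a countable subgroup of Aff(ℝⁿ). Suppose F : ℝⁿ → ℝᵐ is smooth on B with F(B) ⊆ B', G : ℝᵐ → ℝⁿ is smooth on B', and for every r ∈ B there exists γ ∈ Γ with G(F(r)) = γ(r). Then there exists a single γ ∈ Γ such that G(F(r)) = γ(r) for all r ∈ B; moreover F is injective on B, the Fréchet derivative of F at every point of B is an injective linear map, and n ≤ m. -/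
open Metric

private theorem affine_hasFDerivAt {n : ℕ}
    (γ : EuclideanSpace ℝ (Fin n) ≃ᵃ[ℝ] EuclideanSpace ℝ (Fin n))
    (r : EuclideanSpace ℝ (Fin n)) :
    HasFDerivAt ⇑γ (LinearMap.toContinuousLinearMap (γ.linear : _ →ₗ[ℝ] _)) r := by
  have hd := γ.toAffineMap.decomp
  have : ⇑γ = fun x => LinearMap.toContinuousLinearMap (γ.linear : _ →ₗ[ℝ] _) x + γ 0 := by
    ext1 x; simpa using congrFun hd x
  rw [this]
  exact (LinearMap.toContinuousLinearMap _).hasFDerivAt.add_const _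

/-- **Euclidean core of lifting local diffeomorphisms (§4).** Let `B` be a nonempty open ball in
`ℝⁿ`, `B' ⊆ ℝᵐ` open, and `Γ` a countable subgroup of the affine equivalences of `ℝⁿ`.  If `F` is
smooth on `B` with `F '' B ⊆ B'`, `G` is smooth on `B'`, and `G ∘ F` agrees at each point of `B`
with the action of some element of `Γ`, then a single `γ ∈ Γ` works on all of `B`; moreover `F` is
injective on `B`, its Fréchet derivative is injective at every point of `B`, and `n ≤ m`. -/
theorem lift_is_local_diffeo (n m : ℕ)
    (Γ : Subgroup (EuclideanSpace ℝ (Fin n) ≃ᵃ[ℝ] EuclideanSpace ℝ (Fin n)))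
    (hΓ : (Γ : Set (EuclideanSpace ℝ (Fin n) ≃ᵃ[ℝ] EuclideanSpace ℝ (Fin n))).Countable)
    (c : EuclideanSpace ℝ (Fin n)) (ε : ℝ) (hε : 0 < ε)
    (B' : Set (EuclideanSpace ℝ (Fin m))) (hB' : IsOpen B')
    (F : EuclideanSpace ℝ (Fin n) → EuclideanSpace ℝ (Fin m))
    (G : EuclideanSpace ℝ (Fin m) → EuclideanSpace ℝ (Fin n))
    (hF : ContDiffOn ℝ (⊤ : ℕ∞) F (ball c ε)) (hFB : F '' ball c ε ⊆ B')
    (hG : ContDiffOn ℝ (⊤ : ℕ∞) G B')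
    (h : ∀ r ∈ ball c ε, ∃ γ ∈ Γ, G (F r) = γ r) :
    (∃ γ ∈ Γ, ∀ r ∈ ball c ε, G (F r) = γ r) ∧
      Set.InjOn F (ball c ε) ∧
      (∀ r ∈ ball c ε, Function.Injective (fderiv ℝ F r)) ∧
      n ≤ m := by
  classical
  set B : Set (EuclideanSpace ℝ (Fin n)) := ball c ε with hBdef
  have hBo : IsOpen B := isOpen_ball
  have hBconv : Convex ℝ B := convex_ball c ε
  have hmaps : Set.MapsTo F B B' := fun r hr => hFB ⟨r, hr, rfl⟩
  set H : EuclideanSpace ℝ (Fin n) → EuclideanSpace ℝ (Fin n) := G ∘ F with hHdef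
  have hH : ContDiffOn ℝ (⊤ : ℕ∞) H B := hG.comp hF hmaps
  have hHc : ContinuousOn H B := hH.continuousOn
  set φ : _ → (EuclideanSpace ℝ (Fin n) →L[ℝ] EuclideanSpace ℝ (Fin n)) := fun r => fderiv ℝ H r with hφdef
  have hφ : ContDiffOn ℝ (⊤ : ℕ∞) φ B := hH.fderiv_of_isOpen (m := (⊤ : ℕ∞)) hBo (by simp)
  set ψ := fun r => fderiv ℝ φ r with hψdef
  have hψcont : ContinuousOn ψ B :=
    (hφ.fderiv_of_isOpen (m := 0) hBo (by simp)).continuousOn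
  -- the set of points near which a single group element works
  set Ω : Set (EuclideanSpace ℝ (Fin n)) := {r | r ∈ B ∧ ∃ γ ∈ Γ, ∀ᶠ r' in nhds r, H r' = γ r'} with hΩdef
  have := hΓ.to_subtype
  -- density of Ω in B via Baire category
  have hcl : ∀ r ∈ B, r ∈ closure Ω := by
    intro r hr
    rw [Metric.mem_closure_iff]
    intro η hη
    have hrc : dist r c < ε := mem_ball.mp hr
    set δ : ℝ := min (η / 2) ((ε - dist r c) / 2) with hδdef
    have hδ : 0 < δ := lt_min (by linarith) (by linarith)
    have hsub : closedBall r δ ⊆ B := by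
      intro z hz
      have hz' : dist z r ≤ δ := mem_closedBall.mp hz
      have : δ ≤ (ε - dist r c) / 2 := min_le_right _ _
      have := dist_triangle z r c
      exact mem_ball.mpr (by linarith)
    set f : ↥((Γ : Set (EuclideanSpace ℝ (Fin n) ≃ᵃ[ℝ] EuclideanSpace ℝ (Fin n)))) → Set (EuclideanSpace ℝ (Fin n)) :=
      fun γ => ({z ∈ closedBall r δ | H z = γ.1 z}) ∪ (ball r δ)ᶜ with hfdef
    have hfc : ∀ γ, IsClosed (f γ) := by
      intro γ
      refine IsClosed.union ?_ isOpen_ball.isClosed_compl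
      have hco : ContinuousOn (fun z => H z - γ.1 z) (closedBall r δ) :=
        ((hHc.mono hsub).sub ((AffineMap.continuous_of_finiteDimensional
          γ.1.toAffineMap).continuousOn)).mono (le_refl _)
      have := hco.preimage_isClosed_of_isClosed isClosed_closedBall (isClosed_singleton (x := (0 : EuclideanSpace ℝ (Fin n))))
      convert this using 1
      ext z
      simp [sub_eq_zero]
    have hfU : ⋃ γ, f γ = Set.univ := by
      ext z
      simp only [Set.mem_iUnion, Set.mem_univ, iff_true]
      by_cases hz : z ∈ ball r δ
      · obtain ⟨γ, hγΓ, hγ⟩ := h z (hsub (ball_subset_closedBall hz))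
        exact ⟨⟨γ, hγΓ⟩, Or.inl ⟨ball_subset_closedBall hz, hγ⟩⟩
      · exact ⟨⟨1, Γ.one_mem⟩, Or.inr hz⟩
    have hdense := dense_iUnion_interior_of_closed hfc hfU
    obtain ⟨y, hy1, hy2⟩ := hdense.inter_open_nonempty (ball r δ) isOpen_ball
      ⟨r, mem_ball_self hδ⟩
    obtain ⟨γ, hyγ⟩ := Set.mem_iUnion.mp hy2
    refine ⟨y, ?_, ?_⟩
    · refine ⟨hsub (ball_subset_closedBall hy1), γ.1, γ.2, ?_⟩
      have hnb : interior (f γ) ∩ ball r δ ∈ nhds y :=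
        Filter.inter_mem (isOpen_interior.mem_nhds hyγ) (isOpen_ball.mem_nhds hy1)
      filter_upwards [hnb] with z hz
      rcases interior_subset hz.1 with hz' | hz'
      · exact hz'.2
      · exact absurd hz.2 hz'
    · have h1 : dist y r < δ := mem_ball.mp hy1
      have h2 : δ ≤ η / 2 := min_le_left _ _
      rw [dist_comm]
      calc dist y r < δ := h1
        _ < η := by linarith
  -- ψ vanishes on Ω
  have hψΩ : ∀ y ∈ Ω, ψ y = 0 := by
    rintro y ⟨hyB, γ, hγΓ, hev⟩
    obtain ⟨U, hUnh, hUo, hU⟩ := _root_.eventually_nhds_iff.mp hev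
    have hφU : ∀ z ∈ U, φ z = LinearMap.toContinuousLinearMap (γ.linear : _ →ₗ[ℝ] _) := by
      intro z hz
      have hev' : H =ᶠ[nhds z] ⇑γ :=
        Filter.eventually_iff_exists_mem.mpr ⟨U, hUo.mem_nhds hz, hUnh⟩
      show fderiv ℝ H z = _
      rw [hev'.fderiv_eq]
      exact (affine_hasFDerivAt γ z).fderiv
    have hφev : φ =ᶠ[nhds y]
        fun _ => LinearMap.toContinuousLinearMap (γ.linear : _ →ₗ[ℝ] _) :=
      Filter.eventually_iff_exists_mem.mpr ⟨U, hUo.mem_nhds hU, hφU⟩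
    show fderiv ℝ φ y = 0
    rw [hφev.fderiv_eq]
    exact fderiv_const_apply _
  -- ψ vanishes on B by continuity and density
  have hψB : ∀ r ∈ B, ψ r = 0 := by
    intro r hr
    have h1 : Filter.Tendsto ψ (nhdsWithin r Ω) (nhds (ψ r)) :=
      ((hψcont.continuousAt (hBo.mem_nhds hr)).continuousWithinAt)
    have h2 : Filter.Tendsto ψ (nhdsWithin r Ω) (nhds 0) := by
      refine Filter.Tendsto.congr' ?_ tendsto_const_nhds
      filter_upwards [self_mem_nhdsWithin] with z hz
      exact (hψΩ z hz).symm
    have hne : (nhdsWithin r Ω).NeBot := mem_closure_iff_nhdsWithin_neBot.mp (hcl r hr)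
    exact tendsto_nhds_unique h1 h2
  -- pick a base point of Ω
  have hΩne : Ω.Nonempty := by
    have := hcl c (mem_ball_self hε)
    rcases Ω.eq_empty_or_nonempty with hE | hN
    · rw [hE] at this; simp at this
    · exact hN
  obtain ⟨r₀, hr₀B, γ₀, hγ₀Γ, hev₀⟩ := hΩne
  set L₀ : EuclideanSpace ℝ (Fin n) →L[ℝ] EuclideanSpace ℝ (Fin n) := LinearMap.toContinuousLinearMap (γ₀.linear : _ →ₗ[ℝ] _) with hL₀
  -- φ is constant L₀ on B
  have hφconst : ∀ r ∈ B, φ r = L₀ := by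
    have hφr₀ : φ r₀ = L₀ := by
      have hev₀' : H =ᶠ[nhds r₀] ⇑γ₀ := hev₀
      show fderiv ℝ H r₀ = L₀
      rw [hev₀'.fderiv_eq]
      exact (affine_hasFDerivAt γ₀ r₀).fderiv
    have := hBconv.eqOn_of_fderivWithin_eq (hφ.differentiableOn (by simp))
      (differentiableOn_const L₀) hBo.uniqueDiffOn
      (fun x hx => by
        rw [fderivWithin_of_isOpen hBo hx, fderivWithin_of_isOpen hBo hx]
        have h0 : fderiv ℝ φ x = 0 := hψB x hx
        rw [h0, fderiv_const_apply])
      hr₀B hφr₀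
    intro r hr; exact this hr
  -- H = γ₀ on B
  have hHeq : ∀ r ∈ B, H r = γ₀ r := by
    have := hBconv.eqOn_of_fderivWithin_eq (hH.differentiableOn (by simp))
      (fun x _ => (affine_hasFDerivAt γ₀ x).differentiableAt.differentiableWithinAt)
      hBo.uniqueDiffOn
      (fun x hx => by
        rw [fderivWithin_of_isOpen hBo hx, fderivWithin_of_isOpen hBo hx,
          (affine_hasFDerivAt γ₀ x).fderiv]
        exact hφconst x hx)
      hr₀B hev₀.self_of_nhds
    intro r hr; exact this hr
  have hL₀inj : Function.Injective L₀ := by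
    rw [hL₀]
    simp only [LinearMap.coe_toContinuousLinearMap']
    exact γ₀.linear.injective
  -- derivative chain rule on B
  have hchain : ∀ r ∈ B, (fderiv ℝ G (F r)).comp (fderiv ℝ F r) = L₀ := by
    intro r hr
    have hFd : DifferentiableAt ℝ F r :=
      (hF.contDiffAt (hBo.mem_nhds hr)).differentiableAt (by simp)
    have hGd : DifferentiableAt ℝ G (F r) :=
      (hG.contDiffAt (hB'.mem_nhds (hmaps hr))).differentiableAt (by simp)
    have hcomp := fderiv_comp r hGd hFd
    have h2 : fderiv ℝ H r = L₀ := hφconst r hr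
    rw [hHdef] at h2
    rw [← hcomp]
    exact h2
  refine ⟨⟨γ₀, hγ₀Γ, fun r hr => hHeq r hr⟩, ?_, ?_, ?_⟩
  · intro r₁ h₁ r₂ h₂ hFe
    have : γ₀ r₁ = γ₀ r₂ := by
      rw [← hHeq r₁ h₁, ← hHeq r₂ h₂, hHdef]
      simp [Function.comp, hFe]
    exact γ₀.injective this
  · intro r hr
    have := hchain r hr
    have hinj : Function.Injective ((fderiv ℝ G (F r)).comp (fderiv ℝ F r)) := by
      rw [this]; exact hL₀inj
    rw [ContinuousLinearMap.coe_comp'] at hinj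
    exact hinj.of_comp
  · have hinj : Function.Injective (fderiv ℝ F c) := by
      have := hchain c (mem_ball_self hε)
      have hinj : Function.Injective ((fderiv ℝ G (F c)).comp (fderiv ℝ F c)) := by
        rw [this]; exact hL₀inj
      rw [ContinuousLinearMap.coe_comp'] at hinj
      exact hinj.of_comp
    have := LinearMap.finrank_le_finrank_of_injective
      (f := (fderiv ℝ F c : EuclideanSpace ℝ (Fin n) →L[ℝ] EuclideanSpace ℝ (Fin m)).toLinearMap) hinj
    simpa [finrank_euclideanSpace_fin] using this
end

section
/- Let α be an irrational real number. The action groupoid of the group ℤ × ℤ acting on ℝ by (n,m) · x = x + n + αm is equivalent, as a category, to the action groupoid of the group ℤ acting on the unit circle by m · z = e^{2πiαm} z. An equivalence is induced by the functor sending the object x ∈ ℝ to e^{2πix} and the morphism (x, (n,m)) to (e^{2πix}, m). -/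
open CategoryTheory Real

/-- The group `ℤ × ℤ` (written multiplicatively), acting on `ℝ` by `(n, m) • x = x + n + α m`.
The parameter `α` is a phantom parameter fixing the action. -/
def TorusGrp (_α : ℝ) : Type := Multiplicative (ℤ × ℤ)

instance (α : ℝ) : Group (TorusGrp α) := inferInstanceAs (Group (Multiplicative (ℤ × ℤ)))

/-- The pair `(n, m)` underlying an element of `TorusGrp α`. -/
def TorusGrp.pair {α : ℝ} (g : TorusGrp α) : ℤ × ℤ :=
  Multiplicative.toAdd (show Multiplicative (ℤ × ℤ) from g)

lemma TorusGrp.pair_mul {α : ℝ} (g h : TorusGrp α) : (g * h).pair = g.pair + h.pair := rfl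

lemma TorusGrp.pair_one {α : ℝ} : (1 : TorusGrp α).pair = 0 := rfl

/-- The action `(n, m) • x = x + n + α m` of `ℤ × ℤ` on `ℝ`. -/
noncomputable instance (α : ℝ) : MulAction (TorusGrp α) ℝ where
  smul g x := x + (g.pair.1 : ℝ) + α * (g.pair.2 : ℝ)
  one_smul x := by
    show x + ((1 : TorusGrp α).pair.1 : ℝ) + α * ((1 : TorusGrp α).pair.2 : ℝ) = x
    simp [TorusGrp.pair_one]
  mul_smul g h x := by
    show x + ((g * h).pair.1 : ℝ) + α * ((g * h).pair.2 : ℝ)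
      = (x + (h.pair.1 : ℝ) + α * (h.pair.2 : ℝ)) + (g.pair.1 : ℝ) + α * (g.pair.2 : ℝ)
    rw [TorusGrp.pair_mul]
    simp only [Prod.fst_add, Prod.snd_add]
    push_cast
    ring

lemma TorusGrp.smul_def {α : ℝ} (g : TorusGrp α) (x : ℝ) :
    g • x = x + (g.pair.1 : ℝ) + α * (g.pair.2 : ℝ) := rfl

/-- The group `ℤ` (written multiplicatively), acting on the circle by
`m • z = e^{2πiαm} z`.  The parameter `α` is a phantom parameter fixing the action. -/
def RotGrp (_α : ℝ) : Type := Multiplicative ℤ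

instance (α : ℝ) : Group (RotGrp α) := inferInstanceAs (Group (Multiplicative ℤ))

/-- The integer underlying an element of `RotGrp α`. -/
def RotGrp.k {α : ℝ} (g : RotGrp α) : ℤ := Multiplicative.toAdd (show Multiplicative ℤ from g)

lemma RotGrp.k_mul {α : ℝ} (g h : RotGrp α) : (g * h).k = g.k + h.k := rfl

lemma RotGrp.k_one {α : ℝ} : (1 : RotGrp α).k = 0 := rfl

/-- The action `m • z = e^{2πiαm} z` of `ℤ` on the unit circle. -/
noncomputable instance (α : ℝ) : MulAction (RotGrp α) Circle where
  smul g z := Circle.exp (2 * π * (α * (g.k : ℝ))) * z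
  one_smul z := by
    show Circle.exp (2 * π * (α * ((1 : RotGrp α).k : ℝ))) * z = z
    simp [RotGrp.k_one]
  mul_smul g h z := by
    show Circle.exp (2 * π * (α * ((g * h).k : ℝ))) * z
      = Circle.exp (2 * π * (α * (g.k : ℝ))) * (Circle.exp (2 * π * (α * (h.k : ℝ))) * z)
    rw [show 2 * π * (α * (((g * h).k : ℤ) : ℝ))
        = 2 * π * (α * (g.k : ℝ)) + 2 * π * (α * (h.k : ℝ)) by
      rw [RotGrp.k_mul]; push_cast; ring]
    rw [Circle.exp_add, mul_assoc]


lemma RotGrp.smul_def {α : ℝ} (g : RotGrp α) (z : Circle) :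
    g • z = Circle.exp (2 * π * (α * (g.k : ℝ))) * z := rfl

/-- The functor from the torus action groupoid to the rotation action groupoid. -/
noncomputable def torusFunctor (α : ℝ) :
    ActionCategory (TorusGrp α) ℝ ⥤ ActionCategory (RotGrp α) Circle where
  obj p := ActionCategory.objEquiv (RotGrp α) Circle (Circle.exp (2 * π * p.back))
  map {p q} f :=
    ⟨(show RotGrp α from Multiplicative.ofAdd f.val.pair.2), by
      have hq : q.back = (show TorusGrp α from f.val) • p.back := f.2.symm
      show Circle.exp (2 * π * (α * (f.val.pair.2 : ℝ))) * Circle.exp (2 * π * p.back)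
          = Circle.exp (2 * π * q.back)
      rw [hq, TorusGrp.smul_def,
        show (2 : ℝ) * π * (p.back + ((show TorusGrp α from f.val).pair.1 : ℝ)
              + α * ((show TorusGrp α from f.val).pair.2 : ℝ))
            = 2 * π * (α * (f.val.pair.2 : ℝ)) + 2 * π * p.back
              + ((show TorusGrp α from f.val).pair.1 : ℝ) * (2 * π) from by ring,
        Circle.exp_add, Circle.exp_add, Circle.exp_int_mul_two_pi, mul_one]⟩
  map_id _ := rfl
  map_comp _ _ := rfl

instance (α : ℝ) : (torusFunctor α).Faithful where
  map_injective {p q} f g h := by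
    have hval : (Multiplicative.ofAdd f.val.pair.2 : Multiplicative ℤ)
        = Multiplicative.ofAdd g.val.pair.2 := congrArg Subtype.val h
    have h2 : f.val.pair.2 = g.val.pair.2 := by
      simpa using congrArg Multiplicative.toAdd hval
    have hfq : (show TorusGrp α from f.val) • p.back = q.back := f.2
    have hgq : (show TorusGrp α from g.val) • p.back = q.back := g.2
    rw [TorusGrp.smul_def] at hfq hgq
    have h1 : (f.val.pair.1 : ℝ) = (g.val.pair.1 : ℝ) := by
      rw [h2] at hfq
      linarith [hfq.trans hgq.symm]
    have h1' : f.val.pair.1 = g.val.pair.1 := Int.cast_injective h1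
    apply Subtype.ext
    have : f.val.pair = g.val.pair := Prod.ext h1' h2
    exact Multiplicative.toAdd.injective this

instance (α : ℝ) : (torusFunctor α).Full where
  map_surjective {p q} h := by
    have hh : Circle.exp (2 * π * (α * (h.val.k : ℝ))) * Circle.exp (2 * π * p.back)
        = Circle.exp (2 * π * q.back) := h.2
    rw [← Circle.exp_add] at hh
    have h1 : Circle.exp (2 * π * (α * (h.val.k : ℝ)) + 2 * π * p.back - 2 * π * q.back)
        = 1 := by
      rw [show (2 : ℝ) * π * (α * (h.val.k : ℝ)) + 2 * π * p.back - 2 * π * q.back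
          = (2 * π * (α * (h.val.k : ℝ)) + 2 * π * p.back) + (-(2 * π * q.back)) by ring,
        Circle.exp_add, hh, ← Circle.exp_add, add_neg_cancel, Circle.exp_zero]
    obtain ⟨n, hn⟩ := Circle.exp_eq_one.mp h1
    have hπ : (2 : ℝ) * π ≠ 0 := by positivity
    have key : α * (h.val.k : ℝ) + p.back - q.back = n := by
      have h2 : (2 * π) * (α * (h.val.k : ℝ) + p.back - q.back) = (2 * π) * n := by
        linear_combination hn
      exact mul_left_cancel₀ hπ h2
    have hpq : q.back = p.back + ((-n : ℤ) : ℝ) + α * (h.val.k : ℝ) := by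
      push_cast
      linarith
    refine ⟨⟨(show TorusGrp α from Multiplicative.ofAdd (-n, h.val.k)), ?_⟩, ?_⟩
    · show (show TorusGrp α from Multiplicative.ofAdd (-n, h.val.k)) • p.back = q.back
      rw [TorusGrp.smul_def]
      exact hpq.symm
    · apply Subtype.ext
      show (Multiplicative.ofAdd (Multiplicative.toAdd (show Multiplicative ℤ from h.val))
        : Multiplicative ℤ) = h.val
      rfl

instance (α : ℝ) : (torusFunctor α).EssSurj where
  mem_essImage z := by
    refine ⟨ActionCategory.objEquiv (TorusGrp α) ℝ (Complex.arg z.back / (2 * π)), ⟨eqToIso ?_⟩⟩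
    show ActionCategory.objEquiv (RotGrp α) Circle
        (Circle.exp (2 * π * (Complex.arg z.back / (2 * π)))) = z
    have hπ : (2 : ℝ) * π ≠ 0 := by positivity
    rw [mul_div_cancel₀ _ hπ, Circle.exp_arg]
    exact ActionCategory.back_coe z

instance (α : ℝ) : (torusFunctor α).IsEquivalence := {}

/-- **§11.** For irrational `α`, the action groupoid of `ℤ × ℤ` acting on `ℝ` by
`(n, m) • x = x + n + αm` is equivalent, as a category, to the action groupoid of `ℤ` acting
on the unit circle by `m • z = e^{2πiαm} z`, via an equivalence whose functor sends the object
`x` to `e^{2πix}` and the morphism of label `(n, m)` at `x` to the morphism of label `m`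
at `e^{2πix}`. -/
theorem torus_groupoid_equivalence (α : ℝ) (hα : Irrational α) :
    ∃ E : CategoryTheory.Equivalence
        (ActionCategory (TorusGrp α) ℝ) (ActionCategory (RotGrp α) Circle),
      (∀ x : ℝ,
        E.functor.obj (ActionCategory.objEquiv (TorusGrp α) ℝ x)
          = ActionCategory.objEquiv (RotGrp α) Circle (Circle.exp (2 * π * x))) ∧
      (∀ (x : ℝ) (g : TorusGrp α),
        (E.functor.map
            (show (ActionCategory.objEquiv (TorusGrp α) ℝ x) ⟶
                (ActionCategory.objEquiv (TorusGrp α) ℝ (g • x)) from ⟨g, rfl⟩)).val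
          = (show RotGrp α from Multiplicative.ofAdd g.pair.2)) := by
  exact ⟨(torusFunctor α).asEquivalence, fun x => rfl, fun x g => rfl⟩
end

section
/- Let p ≥ 1 be a natural number and let 𝒰_p = {ζ in the unit circle | ζ^p = 1} be the group of p-th roots of unity. For functions f, g : 𝒰_p → C⁰(S¹, ℂ) define the convolution (f * g)_τ(z) = Σ_{σ ∈ 𝒰_p} f_{σ⁻¹τ}(σz) · g_σ(z), and for each z in the unit circle define the matrix M_f(z) ∈ Matrix(𝒰_p, 𝒰_p, ℂ) with entries M_f(z)[τ, σ] = f_{σ⁻¹τ}(σz). Then for all f, g and all z ∈ S¹ one has M_{f*g}(z) = M_f(z) · M_g(z) (matrix product), i.e., f ↦ M_f(z) is multiplicative. -/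
/-- The subgroup `𝒰_p` of `p`-th roots of unity of the unit circle. -/
noncomputable def circleRootsOfUnity (p : ℕ) : Subgroup Circle := (powMonoidHom p).ker

/-- For `p ≠ 0` the group of `p`-th roots of unity in the circle is finite. -/
noncomputable instance circleRootsOfUnity.fintype (p : ℕ) [NeZero p] :
    Fintype (circleRootsOfUnity p) :=
  letI : Fintype (rootsOfUnity p ℂ) := Fintype.ofFinite _
  Fintype.ofInjective
    (fun ζ => (⟨Circle.toUnits ζ.1, by
      rw [mem_rootsOfUnity]
      have h : ζ.1 ^ p = 1 := ζ.2
      rw [← map_pow, h, map_one]⟩ : rootsOfUnity p ℂ))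
    (by
      intro a b hab
      ext1
      have h2 := congrArg Units.val (congrArg Subtype.val hab)
      simp only [Circle.toUnits_apply, Units.val_mk0] at h2
      exact Circle.ext h2)

private lemma mul_inv_comm_left {G : Type*} [CommGroup G] (a b c : G) :
    a⁻¹ * (b⁻¹ * c) = b⁻¹ * (a⁻¹ * c) := by
  rw [← mul_assoc, ← mul_assoc, mul_comm a⁻¹ b⁻¹]

/-- **§12.** Restrict the convolution algebra of the `ℚ`-circle to elements supported in the
group `𝒰_p` of `p`-th roots of unity (`p ≥ 1`): for `f, g : 𝒰_p → C⁰(S¹, ℂ)` the convolution is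
`(f * g)_τ(z) = Σ_{σ ∈ 𝒰_p} f_{σ⁻¹τ}(σz) · g_σ(z)`, and the matrix `M_f(z)` has entries
`M_f(z)[τ, σ] = f_{σ⁻¹τ}(σz)`.  Then `f ↦ M_f(z)` is multiplicative:
`M_{f*g}(z) = M_f(z) · M_g(z)`. -/
theorem matrix_representation_multiplicative (p : ℕ) (hp : 1 ≤ p) :
    haveI : NeZero p := ⟨Nat.one_le_iff_ne_zero.mp hp⟩
    ∀ (conv : ((circleRootsOfUnity p) → C(Circle, ℂ)) →
        ((circleRootsOfUnity p) → C(Circle, ℂ)) → ((circleRootsOfUnity p) → C(Circle, ℂ))),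
      (∀ (f g : (circleRootsOfUnity p) → C(Circle, ℂ)) (τ : circleRootsOfUnity p) (z : Circle),
        conv f g τ z = ∑ σ : circleRootsOfUnity p, f (σ⁻¹ * τ) ((σ : Circle) * z) * g σ z) →
      ∀ (M : ((circleRootsOfUnity p) → C(Circle, ℂ)) → Circle →
          Matrix (circleRootsOfUnity p) (circleRootsOfUnity p) ℂ),
        (∀ (f : (circleRootsOfUnity p) → C(Circle, ℂ)) (z : Circle)
            (τ σ : circleRootsOfUnity p),
          M f z τ σ = f (σ⁻¹ * τ) ((σ : Circle) * z)) →
        ∀ (f g : (circleRootsOfUnity p) → C(Circle, ℂ)) (z : Circle),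
          M (conv f g) z = M f z * M g z := by
  haveI : NeZero p := ⟨Nat.one_le_iff_ne_zero.mp hp⟩
  intro conv hconv M hM f g z
  ext τ σ
  rw [Matrix.mul_apply, hM, hconv]
  refine Fintype.sum_equiv (Equiv.mulRight σ) _ _ (fun ρ => ?_)
  rw [hM, hM]
  simp only [Equiv.coe_mulRight, mul_inv_rev, Submonoid.coe_mul]
  rw [mul_comm ρ σ, inv_mul_cancel_left, Submonoid.coe_mul, mul_comm (σ:Circle) ρ,
    mul_assoc, mul_inv_comm_left, mul_assoc (ρ:Circle) (σ:Circle) z]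
end
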